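/- arXiv:2506.22733 — 6 statements merged into one kernel-verified Lean document; each statement's English description precedes it below -/
import Mathlib

section
/- Let V be a finite set of unit vectors in an n-dimensional real inner product space such that for all distinct u, v ∈ V the inner product ⟨u, v⟩ lies in {τ₁, τ₂}, where τ₁ + τ₂ ≤ 0 and 1 + n·τ₁·τ₂ > 0. Then |V| ≤ (1 − τ₁)(1 − τ₂)·n / (1 + τ₁·τ₂·n). -/
open RealInnerProductSpace

theorem stmt_2 (n : ℕ) (hn : 1 ≤ n) (τ₁ τ₂ : ℝ)
    (hsum : τ₁ + τ₂ ≤ 0) (hpos : 1 + n * (τ₁ * τ₂) > 0)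
    (V : Finset (EuclideanSpace ℝ (Fin n)))
    (hnorm : ∀ v ∈ V, ‖v‖ = 1)
    (hprod : ∀ u ∈ V, ∀ v ∈ V, u ≠ v → ⟪u, v⟫ = τ₁ ∨ ⟪u, v⟫ = τ₂) :
    (V.card : ℝ) ≤ (1 - τ₁) * (1 - τ₂) * n / (1 + τ₁ * τ₂ * n) := by
  classical
  set m : ℝ := (V.card : ℝ) with hm
  have hn0 : (0:ℝ) < n := by exact_mod_cast hn
  have hden : (0:ℝ) < 1 + τ₁ * τ₂ * n := by nlinarith [hpos]
  -- inner product formula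
  have hip : ∀ u v : EuclideanSpace ℝ (Fin n), ⟪u, v⟫ = ∑ i, u i * v i := by
    intro u v
    simp [PiLp.inner_apply, RCLike.inner_apply, mul_comm]
  -- the matrix B
  set B : Fin n → Fin n → ℝ := fun i j => ∑ v ∈ V, v i * v j with hB
  set Q : ℝ := ∑ u ∈ V, ∑ v ∈ V, ⟪u, v⟫ ^ 2 with hQdef
  set P : ℝ := ∑ u ∈ V, ∑ v ∈ V, ⟪u, v⟫ with hPdef
  have hself : ∀ v ∈ V, ⟪v, v⟫ = (1:ℝ) := by
    intro v hv
    rw [real_inner_self_eq_norm_sq, hnorm v hv]; norm_num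
  -- trace of B
  have htrace : ∑ i, B i i = m := by
    rw [hB]
    rw [Finset.sum_comm]
    have : ∀ v ∈ V, ∑ i, v i * v i = (1:ℝ) := by
      intro v hv
      rw [← hip v v, hself v hv]
    rw [Finset.sum_congr rfl this, Finset.sum_const, nsmul_eq_mul, mul_one]
  -- Q = sum of squares of entries of B
  have hQB : Q = ∑ i, ∑ j, (B i j) ^ 2 := by
    rw [hQdef]
    have h1 : ∀ u ∈ V, ∀ v ∈ V, ⟪u, v⟫ ^ 2 = ∑ i, ∑ j, (u i * u j) * (v i * v j) := by
      intro u hu v hv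
      rw [hip, sq, Finset.sum_mul_sum]
      apply Finset.sum_congr rfl; intro i _
      apply Finset.sum_congr rfl; intro j _
      ring
    calc ∑ u ∈ V, ∑ v ∈ V, ⟪u, v⟫ ^ 2
        = ∑ u ∈ V, ∑ v ∈ V, ∑ i, ∑ j, (u i * u j) * (v i * v j) := by
          apply Finset.sum_congr rfl; intro u hu
          apply Finset.sum_congr rfl; intro v hv
          exact h1 u hu v hv
      _ = ∑ u ∈ V, ∑ i, ∑ v ∈ V, ∑ j, (u i * u j) * (v i * v j) :=
          Finset.sum_congr rfl fun u _ => Finset.sum_comm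
      _ = ∑ i, ∑ u ∈ V, ∑ v ∈ V, ∑ j, (u i * u j) * (v i * v j) := Finset.sum_comm
      _ = ∑ i, ∑ u ∈ V, ∑ j, ∑ v ∈ V, (u i * u j) * (v i * v j) :=
          Finset.sum_congr rfl fun i _ => Finset.sum_congr rfl fun u _ => Finset.sum_comm
      _ = ∑ i, ∑ j, ∑ u ∈ V, ∑ v ∈ V, (u i * u j) * (v i * v j) :=
          Finset.sum_congr rfl fun i _ => Finset.sum_comm
      _ = ∑ i, ∑ j, (B i j) ^ 2 := by
          apply Finset.sum_congr rfl; intro i _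
          apply Finset.sum_congr rfl; intro j _
          rw [hB, sq, Finset.sum_mul_sum]
  -- Cauchy–Schwarz: m^2 ≤ n * Q
  have hCS : m ^ 2 ≤ (n : ℝ) * Q := by
    have h1 : (∑ i, B i i) ^ 2 ≤ (Finset.univ.card : ℝ) * ∑ i, (B i i) ^ 2 :=
      sq_sum_le_card_mul_sum_sq (s := (Finset.univ : Finset (Fin n))) (f := fun i => B i i)
    have h2 : ∑ i, (B i i) ^ 2 ≤ ∑ i, ∑ j, (B i j) ^ 2 := by
      apply Finset.sum_le_sum
      intro i _
      have : (B i i) ^ 2 ≤ ∑ j, (B i j) ^ 2 :=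
        Finset.single_le_sum (fun j _ => sq_nonneg (B i j)) (Finset.mem_univ i)
      exact this
    rw [htrace] at h1
    simp only [Finset.card_univ, Fintype.card_fin] at h1
    rw [hQB]
    calc m ^ 2 ≤ (n : ℝ) * ∑ i, (B i i) ^ 2 := h1
      _ ≤ (n : ℝ) * ∑ i, ∑ j, (B i j) ^ 2 := by
          apply mul_le_mul_of_nonneg_left h2 (le_of_lt hn0)
  -- P ≥ 0
  have hP : 0 ≤ P := by
    have : P = ⟪∑ u ∈ V, u, ∑ v ∈ V, v⟫ := by
      rw [sum_inner]
      apply Finset.sum_congr rfl; intro u _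
      rw [inner_sum]
    rw [this]
    exact real_inner_self_nonneg
  -- the key sum identity
  have hS : Q - (τ₁ + τ₂) * P + τ₁ * τ₂ * m ^ 2 = m * ((1 - τ₁) * (1 - τ₂)) := by
    have hexp : ∀ x : ℝ, x ^ 2 - (τ₁ + τ₂) * x + τ₁ * τ₂ = (x - τ₁) * (x - τ₂) := by
      intro x; ring
    have hL : Q - (τ₁ + τ₂) * P + τ₁ * τ₂ * m ^ 2
        = ∑ u ∈ V, ∑ v ∈ V, (⟪u, v⟫ - τ₁) * (⟪u, v⟫ - τ₂) := by
      rw [hQdef, hPdef]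
      rw [Finset.mul_sum, ← Finset.sum_sub_distrib]
      have hmm : τ₁ * τ₂ * m ^ 2 = ∑ u ∈ V, (τ₁ * τ₂ * m) := by
        rw [Finset.sum_const, nsmul_eq_mul, hm]; ring
      rw [hmm, ← Finset.sum_add_distrib]
      apply Finset.sum_congr rfl; intro u _
      rw [Finset.mul_sum, ← Finset.sum_sub_distrib]
      have hmm2 : τ₁ * τ₂ * m = ∑ v ∈ V, (τ₁ * τ₂) := by
        rw [Finset.sum_const, nsmul_eq_mul, hm]; ring
      rw [hmm2, ← Finset.sum_add_distrib]
      apply Finset.sum_congr rfl; intro v _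
      rw [← hexp]
    rw [hL]
    have hinner : ∀ u ∈ V, ∑ v ∈ V, (⟪u, v⟫ - τ₁) * (⟪u, v⟫ - τ₂)
        = (1 - τ₁) * (1 - τ₂) := by
      intro u hu
      rw [Finset.sum_eq_single_of_mem u hu]
      · rw [hself u hu]
      · intro v hv hvu
        rcases hprod u hu v hv (Ne.symm hvu) with h | h <;> rw [h] <;> ring
    rw [Finset.sum_congr rfl hinner, Finset.sum_const, nsmul_eq_mul, hm]
  -- combine
  have key : m ^ 2 * (1 + τ₁ * τ₂ * n) ≤ (n : ℝ) * (m * ((1 - τ₁) * (1 - τ₂))) := by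
    have h1 : 0 ≤ -(τ₁ + τ₂) * P := mul_nonneg (by linarith) hP
    nlinarith [hCS, hS, hn0]
  rw [le_div_iff₀ hden]
  rcases Nat.eq_zero_or_pos V.card with h0 | h0
  · have hm0 : m = 0 := by rw [hm, h0]; norm_num
    rw [hm0, zero_mul]
    have hfac : 0 ≤ (1 - τ₁) * (1 - τ₂) := by
      rcases le_or_gt 0 (τ₁ * τ₂) with h | h
      · nlinarith
      · have h1 : (n : ℝ) * (τ₁ * τ₂) ≤ 1 * (τ₁ * τ₂) := by
          apply mul_le_mul_of_nonpos_right ?_ (le_of_lt h)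
          exact_mod_cast hn
        nlinarith
    positivity
  · have hmpos : (0:ℝ) < m := by rw [hm]; exact_mod_cast h0
    nlinarith [key, hmpos]
end

section
/- Let n < 27 and let V be a finite set of unit vectors in ℝⁿ such that for all distinct u, v ∈ V the inner product ⟨u, v⟩ lies in {1/9, −1/3}. Then |V| ≤ 32n/(27 − n). -/
open RealInnerProductSpace

theorem stmt_3 (n : ℕ) (hn : 1 ≤ n) (hn27 : n < 27)
    (V : Finset (EuclideanSpace ℝ (Fin n)))
    (hnorm : ∀ v ∈ V, ‖v‖ = 1)
    (hprod : ∀ u ∈ V, ∀ v ∈ V, u ≠ v → ⟪u, v⟫ = 1 / 9 ∨ ⟪u, v⟫ = -(1 / 3)) :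
    (V.card : ℝ) ≤ 32 * n / (27 - n) := by
  classical
  have hn27' : (0:ℝ) < 27 - n := by
    have : (n : ℝ) < 27 := by exact_mod_cast hn27
    linarith
  rcases V.eq_empty_or_nonempty with rfl | hne
  · simp
    exact div_nonneg (by positivity) (le_of_lt hn27')
  set N : ℝ := (V.card : ℝ) with hN
  have hN1 : 1 ≤ N := by
    rw [hN]
    exact_mod_cast Finset.card_pos.mpr hne
  have hinner : ∀ u v : EuclideanSpace ℝ (Fin n), ⟪u, v⟫ = ∑ i, u i * v i := by
    intro u v
    simp [PiLp.inner_apply, RCLike.inner_apply, mul_comm]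
  have hself : ∀ v ∈ V, ⟪v, v⟫ = 1 := by
    intro v hv
    rw [real_inner_self_eq_norm_sq, hnorm v hv]; norm_num
  -- key polynomial identity summed over all pairs
  have hkey : ∑ u ∈ V, ∑ v ∈ V, ((⟪u,v⟫)^2 + (2/9)*⟪u,v⟫ - 1/27) = 32/27 * N := by
    have hrow : ∀ u ∈ V, ∑ v ∈ V, ((⟪u,v⟫)^2 + (2/9)*⟪u,v⟫ - 1/27) = 32/27 := by
      intro u hu
      rw [← Finset.add_sum_erase V _ hu]
      have h1 : (⟪u,u⟫)^2 + (2/9)*⟪u,u⟫ - 1/27 = 32/27 := by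
        rw [hself u hu]; norm_num
      have h2 : ∑ v ∈ V.erase u, ((⟪u,v⟫)^2 + (2/9)*⟪u,v⟫ - 1/27) = 0 := by
        apply Finset.sum_eq_zero
        intro v hv
        rcases hprod u hu v (Finset.mem_of_mem_erase hv)
            (Ne.symm (Finset.ne_of_mem_erase hv)) with h | h <;> rw [h] <;> norm_num
      rw [h1, h2, add_zero]
    rw [Finset.sum_congr rfl hrow, Finset.sum_const, nsmul_eq_mul, ← hN]
    ring
  -- S1 ≥ 0
  have hS1 : (0:ℝ) ≤ ∑ u ∈ V, ∑ v ∈ V, ⟪u,v⟫ := by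
    have : ∑ u ∈ V, ∑ v ∈ V, ⟪u,v⟫ = ⟪∑ u ∈ V, u, ∑ v ∈ V, (v : EuclideanSpace ℝ (Fin n))⟫ := by
      rw [sum_inner]
      exact Finset.sum_congr rfl fun u _ => (inner_sum _ _ _).symm
    rw [this]
    exact real_inner_self_nonneg
  -- Gram matrix entries
  set M : Fin n → Fin n → ℝ := fun i j => ∑ v ∈ V, v i * v j with hM
  have htr : ∑ i, M i i = N := by
    show ∑ i, ∑ v ∈ V, v i * v i = N
    rw [Finset.sum_comm]
    have : ∀ v ∈ V, ∑ i, v i * v i = 1 := by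
      intro v hv
      rw [← hinner v v, hself v hv]
    rw [Finset.sum_congr rfl this, Finset.sum_const, nsmul_eq_mul, mul_one]
  -- S2 identity
  have hS2eq : ∑ u ∈ V, ∑ v ∈ V, (⟪u,v⟫)^2 = ∑ i, ∑ j, (M i j)^2 := by
    rw [← Finset.sum_product']
    calc ∑ p ∈ V ×ˢ V, (⟪p.1, p.2⟫ : ℝ)^2
        = ∑ p ∈ V ×ˢ V, ∑ q ∈ Finset.univ ×ˢ (Finset.univ : Finset (Fin n)),
            (p.1 q.1 * p.1 q.2) * (p.2 q.1 * p.2 q.2) := by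
          refine Finset.sum_congr rfl fun p _ => ?_
          rw [hinner, sq, Finset.sum_mul_sum, ← Finset.sum_product']
          refine Finset.sum_congr rfl fun q _ => by ring
      _ = ∑ q ∈ Finset.univ ×ˢ (Finset.univ : Finset (Fin n)), ∑ p ∈ V ×ˢ V,
            (p.1 q.1 * p.1 q.2) * (p.2 q.1 * p.2 q.2) := Finset.sum_comm
      _ = ∑ q ∈ Finset.univ ×ˢ (Finset.univ : Finset (Fin n)), (M q.1 q.2)^2 := by
          refine Finset.sum_congr rfl fun q _ => ?_
          rw [Finset.sum_product' V V (fun u v => u q.1 * u q.2 * (v q.1 * v q.2))]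
          rw [sq]
          exact (Finset.sum_mul_sum V V (fun u => u q.1 * u q.2) (fun v => v q.1 * v q.2)).symm
      _ = ∑ i, ∑ j, (M i j)^2 := Finset.sum_product' _ _ (fun i j => (M i j)^2)
  -- Cauchy–Schwarz-type bound: N^2 ≤ n * S2
  have hCS : N^2 ≤ (n:ℝ) * ∑ u ∈ V, ∑ v ∈ V, (⟪u,v⟫)^2 := by
    rw [hS2eq, ← htr]
    have h1 : (∑ i, M i i)^2 ≤ (Finset.univ (α := Fin n)).card * ∑ i, (M i i)^2 :=
      sq_sum_le_card_mul_sum_sq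
    have h2 : ∑ i, (M i i)^2 ≤ ∑ i, ∑ j, (M i j)^2 := by
      refine Finset.sum_le_sum fun i _ => ?_
      exact Finset.single_le_sum (f := fun j => (M i j)^2) (fun j _ => sq_nonneg _)
        (Finset.mem_univ i)
    calc (∑ i, M i i)^2 ≤ ((Finset.univ (α := Fin n)).card : ℝ) * ∑ i, (M i i)^2 := by
          exact_mod_cast h1
      _ = (n:ℝ) * ∑ i, (M i i)^2 := by rw [Finset.card_univ, Fintype.card_fin]
      _ ≤ (n:ℝ) * ∑ i, ∑ j, (M i j)^2 := by
          apply mul_le_mul_of_nonneg_left h2 (by positivity)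
  -- split the key sum
  have hsplit : ∑ u ∈ V, ∑ v ∈ V, ((⟪u,v⟫)^2 + (2/9)*⟪u,v⟫ - 1/27)
      = (∑ u ∈ V, ∑ v ∈ V, (⟪u,v⟫)^2) + (2/9) * (∑ u ∈ V, ∑ v ∈ V, ⟪u,v⟫) - N^2/27 := by
    simp only [Finset.sum_add_distrib, Finset.sum_sub_distrib, ← Finset.mul_sum,
      Finset.sum_const, nsmul_eq_mul, ← hN]
    ring
  rw [hsplit] at hkey
  rw [le_div_iff₀ hn27']
  nlinarith [hCS, hS1, hkey, hN1, hn27']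
end

section
/- Let V be a finite set of unit vectors in ℝ⁹ such that for all distinct u, v ∈ V the inner product ⟨u, v⟩ lies in {0, −1/2}. Then |V| ≤ 13. -/
open RealInnerProductSpace

section Aux

local notation "E" => EuclideanSpace ℝ (Fin 9)

/-- Expansion of a linear relation against one vector. -/
lemma rel_eq (V : Finset E)
    (hnorm : ∀ v ∈ V, ‖v‖ = 1)
    (hprod : ∀ u ∈ V, ∀ v ∈ V, u ≠ v → ⟪u, v⟫ = 0 ∨ ⟪u, v⟫ = -(1 / 2))
    (c : E → ℝ) (h0 : ∑ v ∈ V, c v • v = 0) {v : E} (hv : v ∈ V) :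
    c v = (1 / 2) * ∑ u ∈ V.filter (fun u => ⟪u, v⟫ = -(1 / 2)), c u := by
  have hvv : ⟪v, v⟫ = (1 : ℝ) := by
    rw [real_inner_self_eq_norm_sq, hnorm v hv]; norm_num
  classical
  have h1 : (∑ u ∈ V, c u * ⟪u, v⟫) = 0 := by
    have h := congrArg (fun w : E => ⟪w, v⟫) h0
    simp only [sum_inner, real_inner_smul_left, inner_zero_left] at h
    exact h
  rw [← Finset.add_sum_erase _ _ hv, hvv, mul_one] at h1
  have h2 : ∑ u ∈ V.erase v, c u * ⟪u, v⟫
      = ∑ u ∈ (V.erase v).filter (fun u => ⟪u, v⟫ = -(1 / 2)), c u * ⟪u, v⟫ := by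
    refine (Finset.sum_filter_of_ne ?_).symm
    intro u hu hne
    rcases hprod u (Finset.mem_of_mem_erase hu) v hv (Finset.ne_of_mem_erase hu) with h | h
    · exact absurd (by rw [h, mul_zero]) hne
    · exact h
  have h3 : (V.erase v).filter (fun u => ⟪u, v⟫ = -(1 / 2))
      = V.filter (fun u => ⟪u, v⟫ = -(1 / 2)) := by
    ext u
    simp only [Finset.mem_filter, Finset.mem_erase]
    constructor
    · rintro ⟨⟨-, h⟩, h2⟩; exact ⟨h, h2⟩
    · rintro ⟨h, h2⟩
      refine ⟨⟨?_, h⟩, h2⟩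
      rintro rfl; rw [hvv] at h2; norm_num at h2
  rw [h2, h3] at h1
  have h4 : ∑ u ∈ V.filter (fun u => ⟪u, v⟫ = -(1 / 2)), c u * ⟪u, v⟫
      = -(1 / 2) * ∑ u ∈ V.filter (fun u => ⟪u, v⟫ = -(1 / 2)), c u := by
    rw [Finset.mul_sum]
    refine Finset.sum_congr rfl ?_
    intro u hu
    rw [(Finset.mem_filter.mp hu).2]; ring
  rw [h4] at h1
  linarith

/-- If `c` is a relation, so is `|c|`. -/
lemma abs_rel (V : Finset E)
    (hnorm : ∀ v ∈ V, ‖v‖ = 1)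
    (hprod : ∀ u ∈ V, ∀ v ∈ V, u ≠ v → ⟪u, v⟫ = 0 ∨ ⟪u, v⟫ = -(1 / 2))
    (c : E → ℝ) (h0 : ∑ v ∈ V, c v • v = 0) :
    ∑ v ∈ V, |c v| • v = 0 := by
  have expand : ∀ d : E → ℝ, ⟪∑ u ∈ V, d u • u, ∑ v ∈ V, d v • v⟫
      = ∑ u ∈ V, ∑ v ∈ V, d u * d v * ⟪u, v⟫ := by
    intro d
    rw [sum_inner]
    refine Finset.sum_congr rfl ?_
    intro u hu
    rw [real_inner_smul_left, inner_sum, Finset.mul_sum]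
    refine Finset.sum_congr rfl ?_
    intro v hv
    rw [real_inner_smul_right]; ring
  have key : ⟪∑ u ∈ V, |c u| • u, ∑ v ∈ V, |c v| • v⟫ ≤ 0 := by
    rw [expand (fun v => |c v|)]
    have h2 : (∑ u ∈ V, ∑ v ∈ V, c u * c v * ⟪u, v⟫) = 0 := by
      rw [← expand c, h0, inner_zero_left]
    rw [← h2]
    refine Finset.sum_le_sum ?_
    intro u hu
    refine Finset.sum_le_sum ?_
    intro v hv
    rcases eq_or_ne u v with rfl | hne
    · rw [abs_mul_abs_self]
    · have hle : ⟪u, v⟫ ≤ 0 := by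
        rcases hprod u hu v hv hne with h | h <;> rw [h] <;> norm_num
      have habs : c u * c v ≤ |c u| * |c v| := by
        rw [← abs_mul]; exact le_abs_self _
      nlinarith
  have hnonneg : (0:ℝ) ≤ ⟪∑ u ∈ V, |c u| • u, ∑ v ∈ V, |c v| • v⟫ :=
    real_inner_self_nonneg
  have : ⟪∑ u ∈ V, |c u| • u, ∑ v ∈ V, |c v| • v⟫ = 0 := le_antisymm key hnonneg
  exact inner_self_eq_zero.mp this

end Aux

section Main

local notation "E" => EuclideanSpace ℝ (Fin 9)

lemma nat_helper (m r : ℕ) (h3 : 3 ≤ m) (h4 : m - 1 ≤ r) : 2 * m ≤ 3 * r := by omega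

lemma nat_helper2 (a b c : ℕ) (h : b ≤ a) (h2 : c = a - b) : a = b + c := by omega

theorem key : ∀ V : Finset E,
    (∀ v ∈ V, ‖v‖ = 1) →
    (∀ u ∈ V, ∀ v ∈ V, u ≠ v → ⟪u, v⟫ = 0 ∨ ⟪u, v⟫ = -(1 / 2)) →
    2 * V.card ≤ 3 * Module.finrank ℝ (Submodule.span ℝ (V : Set E)) := by
  intro V
  induction V using Finset.strongInduction with
  | _ V ih =>
  intro hnorm hprod
  classical
  by_cases hind : LinearIndependent ℝ (fun x : (V : Set E) => (x : E))
  · have hV : Module.finrank ℝ (Submodule.span ℝ (V : Set E)) = V.card := by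
      rw [finrank_span_set_eq_card hind]
      simp
    omega
  · -- get a nonzero relation
    have hex : ∃ k : ℕ, ∃ c : E → ℝ,
        (∑ v ∈ V, c v • v = 0) ∧ 0 < (V.filter fun v => c v ≠ 0).card ∧
        (V.filter fun v => c v ≠ 0).card = k := by
      have h' : ¬ LinearIndependent ℝ (id ∘ Subtype.val : ↥(V : Set E) → E) := hind
      obtain ⟨f, hfsupp, hf0, hfne⟩ := linearDepOn_iff'.mp h'
      rw [Finsupp.mem_supported] at hfsupp
      have hrel : ∑ v ∈ V, (f : E → ℝ) v • v = 0 := by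
        rw [Finsupp.linearCombination_apply, Finsupp.sum] at hf0
        rw [← hf0]
        refine (Finset.sum_subset ?_ ?_).symm
        · intro x hx
          exact hfsupp hx
        · intro x _ hx
          rw [Finsupp.notMem_support_iff.mp hx, zero_smul]
      refine ⟨_, f, hrel, ?_, rfl⟩
      obtain ⟨x₀, hx₀⟩ : ∃ x, f x ≠ 0 := by
        by_contra h
        push_neg at h
        exact hfne (Finsupp.ext h)
      refine Finset.card_pos.mpr ⟨x₀, Finset.mem_filter.mpr ⟨?_, hx₀⟩⟩
      exact hfsupp (Finsupp.mem_support_iff.mpr hx₀)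
    obtain ⟨c, hc0, hcpos, hccard⟩ := Nat.find_spec hex
    have hmin : ∀ k < Nat.find hex, ¬ ∃ c : E → ℝ,
        (∑ v ∈ V, c v • v = 0) ∧ 0 < (V.filter fun v => c v ≠ 0).card ∧
        (V.filter fun v => c v ≠ 0).card = k := fun k hk => Nat.find_min hex hk
    set d : E → ℝ := fun v => |c v| with hd
    have hd0 : ∑ v ∈ V, d v • v = 0 := abs_rel V hnorm hprod c hc0
    set S : Finset E := V.filter (fun v => c v ≠ 0) with hS
    have hSV : S ⊆ V := Finset.filter_subset _ _
    have hdpos : ∀ v ∈ S, 0 < d v := by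
      intro v hv
      exact abs_pos.mpr (Finset.mem_filter.mp hv).2
    have hdzero : ∀ v ∈ V, v ∉ S → d v = 0 := by
      intro v hv hvs
      have : ¬ c v ≠ 0 := fun h => hvs (Finset.mem_filter.mpr ⟨hv, h⟩)
      simp only [hd, abs_eq_zero]
      tauto
    have hSne : S.Nonempty := Finset.card_pos.mp hcpos
    -- support has at least 3 elements
    have hS3 : 3 ≤ S.card := by
      obtain ⟨b, hbS, hbmax⟩ := S.exists_max_image d hSne
      have hbV : b ∈ V := hSV hbS
      have hdb : 0 < d b := hdpos b hbS
      have heq := rel_eq V hnorm hprod d hd0 hbV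
      set N : Finset E := V.filter (fun u => ⟪u, b⟫ = -(1 / 2)) with hN
      set T : Finset E := N ∩ S with hT
      have hTS : T ⊆ S := Finset.inter_subset_right
      have hsum : ∑ u ∈ N, d u = ∑ u ∈ T, d u := by
        refine (Finset.sum_subset Finset.inter_subset_left ?_).symm
        intro u hu hut
        refine hdzero u (Finset.mem_of_mem_filter u hu) ?_
        intro huS
        exact hut (Finset.mem_inter.mpr ⟨hu, huS⟩)
      have hub : ∑ u ∈ T, d u ≤ (T.card : ℝ) * d b := by
        calc ∑ u ∈ T, d u ≤ ∑ _u ∈ T, d b :=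
              Finset.sum_le_sum (fun u hu => hbmax u (hTS hu))
          _ = (T.card : ℝ) * d b := by rw [Finset.sum_const, nsmul_eq_mul]
      have hreal : d b ≤ 1 / 2 * ((T.card : ℝ) * d b) := by
        calc d b = 1 / 2 * ∑ u ∈ T, d u := by rw [heq, hsum]
          _ ≤ 1 / 2 * ((T.card : ℝ) * d b) := by linarith
      have h2 : (2 : ℝ) ≤ (T.card : ℝ) := by nlinarith
      have hT2 : 2 ≤ T.card := by exact_mod_cast h2
      have hbT : b ∉ T := by
        intro hbT
        have h1 : ⟪b, b⟫ = -(1/2 : ℝ) := (Finset.mem_filter.mp (Finset.mem_inter.mp hbT).1).2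
        have hb1 : ⟪b, b⟫ = (1:ℝ) := by
          rw [real_inner_self_eq_norm_sq, hnorm b hbV]; norm_num
        rw [hb1] at h1
        norm_num at h1
      have hins : insert b T ⊆ S := by
        intro x hx
        rcases Finset.mem_insert.mp hx with rfl | hx
        · exact hbS
        · exact hTS hx
      calc 3 ≤ T.card + 1 := by omega
        _ = (insert b T).card := (Finset.card_insert_of_notMem hbT).symm
        _ ≤ S.card := Finset.card_le_card hins
    -- orthogonality between S and V \ S
    have horth : ∀ u ∈ V, u ∉ S → ∀ v ∈ S, ⟪u, v⟫ = 0 := by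
      intro u hu huS v hvS
      by_contra hne
      have huv : u ≠ v := by rintro rfl; exact huS hvS
      have h12 : ⟪u, v⟫ = -(1/2 : ℝ) := (hprod u hu v (hSV hvS) huv).resolve_left hne
      have heq := rel_eq V hnorm hprod d hd0 hu
      have hvN : v ∈ V.filter (fun w => ⟪w, u⟫ = -(1 / 2)) := by
        refine Finset.mem_filter.mpr ⟨hSV hvS, ?_⟩
        rw [real_inner_comm]
        exact h12
      have hge : d v ≤ ∑ w ∈ V.filter (fun w => ⟪w, u⟫ = -(1 / 2)), d w :=
        Finset.single_le_sum (fun w _ => abs_nonneg _) hvN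
      have h1 := hdzero u hu huS
      have h2 := hdpos v hvS
      nlinarith
    -- span of S has rank at least S.card - 1
    obtain ⟨b, hbS⟩ := hSne
    have hindep : LinearIndependent ℝ ((↑) : ((S.erase b : Finset E) : Set E) → E) := by
      by_contra hdep
      have hdep' : ¬ LinearIndependent ℝ
          (id ∘ Subtype.val : ↥((S.erase b : Finset E) : Set E) → E) := hdep
      obtain ⟨f, hfsupp, hf0, hfne⟩ := linearDepOn_iff'.mp hdep'
      rw [Finsupp.mem_supported] at hfsupp
      have hsubV : f.support ⊆ V := by
        intro x hx
        exact hSV (Finset.mem_of_mem_erase (hfsupp hx))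
      have hrel : ∑ v ∈ V, (f : E → ℝ) v • v = 0 := by
        rw [Finsupp.linearCombination_apply, Finsupp.sum] at hf0
        rw [← hf0]
        refine (Finset.sum_subset hsubV ?_).symm
        intro x _ hx
        rw [Finsupp.notMem_support_iff.mp hx, zero_smul]
      have hfilt : (V.filter fun v => (f : E → ℝ) v ≠ 0) ⊆ S.erase b := by
        intro x hx
        exact hfsupp (Finsupp.mem_support_iff.mpr (Finset.mem_filter.mp hx).2)
      obtain ⟨x₀, hx₀⟩ : ∃ x, f x ≠ 0 := by
        by_contra h
        push_neg at h
        exact hfne (Finsupp.ext h)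
      have hpos : 0 < (V.filter fun v => (f : E → ℝ) v ≠ 0).card := by
        refine Finset.card_pos.mpr ⟨x₀, Finset.mem_filter.mpr ⟨?_, hx₀⟩⟩
        exact hsubV (Finsupp.mem_support_iff.mpr hx₀)
      have hlt : (V.filter fun v => (f : E → ℝ) v ≠ 0).card < Nat.find hex := by
        calc (V.filter fun v => (f : E → ℝ) v ≠ 0).card
            ≤ (S.erase b).card := Finset.card_le_card hfilt
          _ = S.card - 1 := Finset.card_erase_of_mem hbS
          _ < S.card := by omega
          _ = Nat.find hex := hccard
      exact hmin _ hlt ⟨f, hrel, hpos, rfl⟩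
    have hrankS : S.card - 1 ≤ Module.finrank ℝ (Submodule.span ℝ (S : Set E)) := by
      have h1 : Module.finrank ℝ (Submodule.span ℝ ((S.erase b : Finset E) : Set E))
          = S.card - 1 := by
        rw [finrank_span_finset_eq_card hindep, Finset.card_erase_of_mem hbS]
      rw [← h1]
      refine Submodule.finrank_mono (Submodule.span_mono ?_)
      exact_mod_cast Finset.erase_subset _ _
    -- split V into S and V \ S
    set V' : Finset E := V \ S with hV'
    have hV'V : V' ⊂ V := by
      rw [hV']
      exact Finset.sdiff_ssubset hSV (Finset.card_pos.mp (by omega))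
    have ihV' := ih V' hV'V
      (fun v hv => hnorm v (Finset.mem_sdiff.mp hv).1)
      (fun u hu v hv huv => hprod u (Finset.mem_sdiff.mp hu).1 v (Finset.mem_sdiff.mp hv).1 huv)
    set A := Submodule.span ℝ (S : Set E) with hA
    set B := Submodule.span ℝ ((V' : Finset E) : Set E) with hB
    have hAB : A ≤ Bᗮ := by
      rw [hA, Submodule.span_le]
      intro s hs
      rw [SetLike.mem_coe, Submodule.mem_orthogonal]
      intro u hu
      induction hu using Submodule.span_induction with
      | mem x hx =>
        have hx' : x ∈ V' := hx
        have hxV := (Finset.mem_sdiff.mp hx').1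
        have hxS := (Finset.mem_sdiff.mp hx').2
        exact horth x hxV hxS s hs
      | zero => exact inner_zero_left _
      | add x y _ _ hx hy => rw [inner_add_left, hx, hy, add_zero]
      | smul a x _ hx => rw [real_inner_smul_left, hx, mul_zero]
    have hdisj : Disjoint A B :=
      ((Submodule.orthogonal_disjoint B).symm.mono_left hAB)
    have hsup : A ⊔ B = Submodule.span ℝ (V : Set E) := by
      rw [hA, hB, ← Submodule.span_union, ← Finset.coe_union,
        Finset.union_sdiff_of_subset hSV]
    have hranksum : Module.finrank ℝ A + Module.finrank ℝ B
        = Module.finrank ℝ (Submodule.span ℝ (V : Set E)) := by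
      have h := Submodule.finrank_sup_add_finrank_inf_eq A B
      rw [hdisj.eq_bot, finrank_bot, add_zero, hsup] at h
      exact h.symm
    have hVcard : V.card = S.card + V'.card :=
      nat_helper2 _ _ _ (Finset.card_le_card hSV) (by rw [hV']; exact Finset.card_sdiff_of_subset hSV)
    have h2S : 2 * S.card ≤ 3 * Module.finrank ℝ A := nat_helper _ _ hS3 hrankS
    calc 2 * V.card = 2 * S.card + 2 * V'.card := by rw [hVcard]; ring
      _ ≤ 3 * Module.finrank ℝ A + 3 * Module.finrank ℝ B := Nat.add_le_add h2S ihV'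
      _ = 3 * (Module.finrank ℝ A + Module.finrank ℝ B) := by ring
      _ = 3 * Module.finrank ℝ (Submodule.span ℝ (V : Set E)) := by rw [hranksum]

theorem stmt_4 (V : Finset (EuclideanSpace ℝ (Fin 9)))
    (hnorm : ∀ v ∈ V, ‖v‖ = 1)
    (hprod : ∀ u ∈ V, ∀ v ∈ V, u ≠ v → ⟪u, v⟫ = 0 ∨ ⟪u, v⟫ = -(1 / 2)) :
    V.card ≤ 13 := by
  have h1 := key V hnorm hprod
  have h2 : Module.finrank ℝ (Submodule.span ℝ (V : Set (EuclideanSpace ℝ (Fin 9)))) ≤ 9 := by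
    have := Submodule.finrank_le (Submodule.span ℝ (V : Set (EuclideanSpace ℝ (Fin 9))))
    simpa using this
  omega

end Main
end

section
/- Let X be a set of vectors in {−1, 1}⁹ such that each vector has an even number of coordinates equal to −1, and such that the Hamming distance between any two distinct vectors of X lies in {4, 6}. Then |X| ≤ 16. -/
theorem stmt_11 (X : Finset (Fin 9 → ℤ))
    (hval : ∀ v ∈ X, ∀ i, v i = -1 ∨ v i = 1)
    (heven : ∀ v ∈ X, Even (Finset.univ.filter (fun i => v i = -1)).card)
    (hdist : ∀ u ∈ X, ∀ v ∈ X, u ≠ v →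
        (Finset.univ.filter (fun i => u i ≠ v i)).card = 4 ∨
        (Finset.univ.filter (fun i => u i ≠ v i)).card = 6) :
    X.card ≤ 16 := by
  classical
  set t : (Fin 9 → ℤ) → (Fin 9 → ℤ) → ℤ := fun u v => ∑ i, u i * v i with ht
  have hc0 : (0:ℤ) ≤ (X.card : ℤ) := by positivity
  have hprod : ∀ u ∈ X, ∀ v ∈ X, ∀ i, u i * v i = if u i ≠ v i then (-1:ℤ) else 1 := by
    intro u hu v hv i
    rcases hval u hu i with h1 | h1 <;> rcases hval v hv i with h2 | h2 <;>
      rw [h1, h2] <;> norm_num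
  have hself : ∀ u ∈ X, t u u = 9 := by
    intro u hu
    have : ∀ i, u i * u i = 1 := by
      intro i; rcases hval u hu i with h | h <;> rw [h] <;> norm_num
    simp [ht, this]
  have hne : ∀ u ∈ X, ∀ v ∈ X, u ≠ v → (t u v - 1) * (t u v + 3) = 0 := by
    intro u hu v hv huv
    have hd := hdist u hu v hv huv
    have hsum : t u v = ∑ i : Fin 9, (if u i ≠ v i then (-1:ℤ) else 1) :=
      Finset.sum_congr rfl fun i _ => hprod u hu v hv i
    rw [Finset.sum_ite, Finset.sum_const, Finset.sum_const] at hsum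
    have hcard : (Finset.univ.filter (fun i => u i ≠ v i)).card
        + (Finset.univ.filter (fun i => ¬ u i ≠ v i)).card = 9 := by
      rw [Finset.card_filter_add_card_filter_not]
      simp
    rcases hd with h4 | h4 <;> rw [h4] at hsum hcard
    · have h5 : (Finset.univ.filter (fun i => ¬ u i ≠ v i)).card = 5 := by omega
      rw [h5] at hsum
      norm_num at hsum
      rw [hsum]; ring
    · have h5 : (Finset.univ.filter (fun i => ¬ u i ≠ v i)).card = 3 := by omega
      rw [h5] at hsum
      norm_num at hsum
      rw [hsum]; ring
  -- diagonal sum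
  have hdiag : ∑ u ∈ X, ∑ v ∈ X, (t u v - 1) * (t u v + 3) = 96 * (X.card : ℤ) := by
    have : ∀ u ∈ X, ∑ v ∈ X, (t u v - 1) * (t u v + 3) = 96 := by
      intro u hu
      rw [Finset.sum_eq_single_of_mem u hu]
      · rw [hself u hu]; ring
      · intro v hv hvu
        exact hne u hu v hv (Ne.symm hvu)
    rw [Finset.sum_congr rfl this, Finset.sum_const]
    push_cast
    ring
  -- expansion of sum of t^2
  have hsq : ∑ u ∈ X, ∑ v ∈ X, t u v * t u v
      = ∑ i : Fin 9, ∑ j : Fin 9, (∑ u ∈ X, u i * u j) ^ 2 := by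
    have step1 : ∀ u v : Fin 9 → ℤ,
        t u v * t u v = ∑ i : Fin 9, ∑ j : Fin 9, (u i * u j) * (v i * v j) := by
      intro u v
      rw [ht]
      rw [Finset.sum_mul_sum]
      apply Finset.sum_congr rfl; intro i _
      apply Finset.sum_congr rfl; intro j _
      ring
    calc ∑ u ∈ X, ∑ v ∈ X, t u v * t u v
        = ∑ u ∈ X, ∑ v ∈ X, ∑ i : Fin 9, ∑ j : Fin 9, (u i * u j) * (v i * v j) := by
          exact Finset.sum_congr rfl fun u _ => Finset.sum_congr rfl fun v _ => step1 u v
      _ = ∑ u ∈ X, ∑ i : Fin 9, ∑ v ∈ X, ∑ j : Fin 9, (u i * u j) * (v i * v j) := by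
          exact Finset.sum_congr rfl fun u _ => Finset.sum_comm
      _ = ∑ i : Fin 9, ∑ u ∈ X, ∑ v ∈ X, ∑ j : Fin 9, (u i * u j) * (v i * v j) := by
          exact Finset.sum_comm
      _ = ∑ i : Fin 9, ∑ u ∈ X, ∑ j : Fin 9, ∑ v ∈ X, (u i * u j) * (v i * v j) := by
          exact Finset.sum_congr rfl fun i _ => Finset.sum_congr rfl fun u _ => Finset.sum_comm
      _ = ∑ i : Fin 9, ∑ j : Fin 9, ∑ u ∈ X, ∑ v ∈ X, (u i * u j) * (v i * v j) := by
          exact Finset.sum_congr rfl fun i _ => Finset.sum_comm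
      _ = ∑ i : Fin 9, ∑ j : Fin 9, (∑ u ∈ X, u i * u j) ^ 2 := by
          apply Finset.sum_congr rfl; intro i _
          apply Finset.sum_congr rfl; intro j _
          rw [pow_two, Finset.sum_mul_sum]
  -- lower bound for sum of t^2
  have hsq_ge : (9 : ℤ) * (X.card)^2 ≤ ∑ u ∈ X, ∑ v ∈ X, t u v * t u v := by
    rw [hsq]
    have hdiagterm : ∀ i : Fin 9, (∑ u ∈ X, u i * u i) ^ 2 = ((X.card : ℤ))^2 := by
      intro i
      have : ∑ u ∈ X, u i * u i = (X.card : ℤ) := by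
        rw [Finset.sum_congr rfl (fun u hu => by
          rcases hval u hu i with h | h <;> rw [h] <;> norm_num)]
        simp
      rw [this]
    calc (9:ℤ) * (X.card)^2 = ∑ i : Fin 9, (∑ u ∈ X, u i * u i) ^ 2 := by
          simp [hdiagterm]
      _ ≤ ∑ i : Fin 9, ∑ j : Fin 9, (∑ u ∈ X, u i * u j) ^ 2 := by
          apply Finset.sum_le_sum
          intro i _
          exact Finset.single_le_sum (f := fun j => (∑ u ∈ X, u i * u j) ^ 2)
            (fun j _ => sq_nonneg _) (Finset.mem_univ i)
  -- lower bound for sum of t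
  have hlin_ge : (0:ℤ) ≤ ∑ u ∈ X, ∑ v ∈ X, t u v := by
    have : ∑ u ∈ X, ∑ v ∈ X, t u v = ∑ i : Fin 9, (∑ u ∈ X, u i) ^ 2 := by
      calc ∑ u ∈ X, ∑ v ∈ X, t u v
          = ∑ u ∈ X, ∑ i : Fin 9, ∑ v ∈ X, u i * v i := by
            exact Finset.sum_congr rfl fun u _ => Finset.sum_comm
        _ = ∑ i : Fin 9, ∑ u ∈ X, ∑ v ∈ X, u i * v i := Finset.sum_comm
        _ = ∑ i : Fin 9, (∑ u ∈ X, u i) ^ 2 := by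
            apply Finset.sum_congr rfl; intro i _
            rw [pow_two, Finset.sum_mul_sum]
    rw [this]
    exact Finset.sum_nonneg fun i _ => sq_nonneg _
  -- combine
  have hexpand : ∑ u ∈ X, ∑ v ∈ X, (t u v - 1) * (t u v + 3)
      = (∑ u ∈ X, ∑ v ∈ X, t u v * t u v) + 2 * (∑ u ∈ X, ∑ v ∈ X, t u v)
        - 3 * (X.card : ℤ)^2 := by
    have : ∀ u ∈ X, ∑ v ∈ X, (t u v - 1) * (t u v + 3)
        = (∑ v ∈ X, t u v * t u v) + 2 * (∑ v ∈ X, t u v) - 3 * (X.card : ℤ) := by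
      intro u _
      rw [Finset.mul_sum, ← Finset.sum_add_distrib]
      rw [show (3:ℤ) * (X.card : ℤ) = ∑ v ∈ X, (3:ℤ) by rw [Finset.sum_const]; push_cast; ring]
      rw [← Finset.sum_sub_distrib]
      apply Finset.sum_congr rfl; intro v _; ring
    rw [Finset.sum_congr rfl this, Finset.sum_sub_distrib, Finset.sum_add_distrib,
      ← Finset.mul_sum, Finset.sum_const]
    push_cast
    ring
  have key : 6 * ((X.card : ℤ))^2 ≤ 96 * (X.card : ℤ) := by
    rw [← hdiag, hexpand]
    linarith
  have : (X.card : ℤ) ≤ 16 := by nlinarith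
  exact_mod_cast this
end

section
/- Let E₈ be the (positive definite) E₈ root lattice and let S be a set of roots (vectors of squared norm 2) such that ⟨u, v⟩ ∈ {0, −1} for all distinct u, v ∈ S. Then |S| ≤ 12, and this bound is attained: there exist 12 roots with this property (four mutually orthogonal triples {α, β, −α−β} from orthogonal A₂-subsystems). -/
/-- Membership in the E₈ lattice, realized inside ℝ⁸: all coordinates are
integers or all are half-integers, and the coordinate sum is an even integer. -/
def IsE8 (v : Fin 8 → ℝ) : Prop :=
  ((∀ i, ∃ k : ℤ, v i = (k : ℝ)) ∨ (∀ i, ∃ k : ℤ, v i = (k : ℝ) + 1 / 2)) ∧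
  ∃ m : ℤ, ∑ i, v i = 2 * (m : ℝ)

/-- A root of the E₈ lattice: a lattice vector of squared norm 2. -/
def IsE8Root (v : Fin 8 → ℝ) : Prop :=
  IsE8 v ∧ ∑ i, (v i) ^ 2 = 2


open Finset Module Submodule

namespace E8Aux

/-- dot product on `Fin 8 → ℝ`. -/
def dotp (u v : Fin 8 → ℝ) : ℝ := ∑ i, u i * v i

lemma dotp_comm (u v : Fin 8 → ℝ) : dotp u v = dotp v u :=
  Finset.sum_congr rfl fun i _ => mul_comm _ _

lemma dotp_zero_left (w : Fin 8 → ℝ) : dotp 0 w = 0 := by simp [dotp]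

lemma dotp_add_left (x y w : Fin 8 → ℝ) : dotp (x + y) w = dotp x w + dotp y w := by
  simp [dotp, add_mul, Finset.sum_add_distrib]

lemma dotp_smul_left (c : ℝ) (x w : Fin 8 → ℝ) : dotp (c • x) w = c * dotp x w := by
  simp [dotp, Finset.mul_sum, mul_assoc]

lemma eq_zero_of_dotp_self_nonpos (v : Fin 8 → ℝ) (h : dotp v v ≤ 0) : v = 0 := by
  have h0 : dotp v v = 0 :=
    le_antisymm h (Finset.sum_nonneg fun i _ => mul_self_nonneg _)
  have := (Finset.sum_eq_zero_iff_of_nonneg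
    (fun i _ => mul_self_nonneg (v i))).mp h0
  funext i
  exact mul_self_eq_zero.mp (this i (Finset.mem_univ i))

lemma dotp_sum_left {α : Type*} (s : Finset α) (c : α → ℝ) (f : α → (Fin 8 → ℝ))
    (w : Fin 8 → ℝ) :
    dotp (∑ a ∈ s, c a • f a) w = ∑ a ∈ s, c a * dotp (f a) w := by
  unfold dotp
  simp only [Finset.sum_apply, Pi.smul_apply, smul_eq_mul, Finset.sum_mul, Finset.mul_sum]
  rw [Finset.sum_comm]
  exact Finset.sum_congr rfl fun a _ => Finset.sum_congr rfl fun i _ => by ring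


noncomputable def TC (C : Finset (Fin 8 → ℝ)) : (↥C → ℝ) →ₗ[ℝ] (Fin 8 → ℝ) where
  toFun c := ∑ v : ↥C, c v • (v : Fin 8 → ℝ)
  map_add' a b := by simp [add_smul, Finset.sum_add_distrib]
  map_smul' r a := by simp [smul_smul, Finset.smul_sum]

lemma range_TC (C : Finset (Fin 8 → ℝ)) :
    LinearMap.range (TC C) = span ℝ (C : Set (Fin 8 → ℝ)) := by
  apply le_antisymm
  · rintro x ⟨c, rfl⟩
    exact Submodule.sum_mem _ fun v _ =>
      Submodule.smul_mem _ _ (Submodule.subset_span v.2)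
  · rw [Submodule.span_le]
    intro v hv
    refine ⟨Pi.single ⟨v, hv⟩ (1:ℝ), ?_⟩
    change ∑ w : ↥C, (Pi.single (⟨v, hv⟩ : ↥C) (1:ℝ) : ↥C → ℝ) w • (w : Fin 8 → ℝ) = v
    rw [Finset.sum_eq_single (⟨v, hv⟩ : ↥C)]
    · simp
    · intro b _ hb
      rw [Pi.single_apply, if_neg (by exact fun h => hb (h ▸ rfl)), zero_smul]
    · intro h; exact absurd (Finset.mem_univ _) h

lemma dotp_TC (C : Finset (Fin 8 → ℝ)) (c : ↥C → ℝ) (w : Fin 8 → ℝ) :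
    dotp (TC C c) w = ∑ v : ↥C, c v * dotp (v : Fin 8 → ℝ) w :=
  dotp_sum_left Finset.univ c _ w


section Component

variable (C : Finset (Fin 8 → ℝ))

lemma ker_key (hroot : ∀ v ∈ C, dotp v v = 2)
    (x : ↥C → ℝ) (hx : x ∈ LinearMap.ker (TC C)) (u : ↥C) :
    x u * 2 + ∑ v ∈ Finset.univ.erase u, x v * dotp (v : Fin 8 → ℝ) u = 0 := by
  have h : (0:ℝ) = ∑ v : ↥C, x v * dotp (v : Fin 8 → ℝ) u := by
    rw [← dotp_TC, LinearMap.mem_ker.mp hx, dotp_zero_left]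
  rw [← Finset.add_sum_erase _ _ (Finset.mem_univ u), hroot (u : Fin 8 → ℝ) u.2] at h
  linarith

lemma abs_mem_ker (hroot : ∀ v ∈ C, dotp v v = 2)
    (hpair : ∀ u ∈ C, ∀ v ∈ C, u ≠ v → dotp u v = 0 ∨ dotp u v = -1)
    (x : ↥C → ℝ) (hx : x ∈ LinearMap.ker (TC C)) :
    (fun v => |x v|) ∈ LinearMap.ker (TC C) := by
  set a : ↥C → ℝ := fun v => |x v| with ha
  have hdouble : ∀ d : ↥C → ℝ, dotp (TC C d) (TC C d)
      = ∑ u : ↥C, ∑ v : ↥C, (d u * d v) * dotp (v : Fin 8 → ℝ) u := by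
    intro d
    rw [dotp_TC]
    refine Finset.sum_congr rfl fun u _ => ?_
    rw [dotp_comm, dotp_TC, Finset.mul_sum]
    exact Finset.sum_congr rfl fun v _ => by ring
  have hzero : dotp (TC C x) (TC C x) = 0 := by
    rw [LinearMap.mem_ker.mp hx, dotp_zero_left]
  have hle : dotp (TC C a) (TC C a) ≤ 0 := by
    rw [hdouble a, ← hzero, hdouble x]
    refine Finset.sum_le_sum fun u _ => Finset.sum_le_sum fun v _ => ?_
    by_cases huv : v = u
    · subst huv
      have h1 : a v * a v = x v * x v := abs_mul_abs_self _
      rw [h1]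
    · have hne : (v : Fin 8 → ℝ) ≠ (u : Fin 8 → ℝ) := fun h => huv (Subtype.ext h)
      have hdot : dotp (v : Fin 8 → ℝ) u ≤ 0 := by
        rcases hpair _ v.2 _ u.2 hne with h | h <;> rw [h] <;> norm_num
      have hcc : x u * x v ≤ a u * a v := by
        calc x u * x v ≤ |x u * x v| := le_abs_self _
        _ = a u * a v := abs_mul _ _
      exact mul_le_mul_of_nonpos_right hcc hdot
  exact LinearMap.mem_ker.mpr (eq_zero_of_dotp_self_nonpos _ hle)

lemma ker_prop (hroot : ∀ v ∈ C, dotp v v = 2)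
    (hpair : ∀ u ∈ C, ∀ v ∈ C, u ≠ v → dotp u v = 0 ∨ dotp u v = -1)
    (x : ↥C → ℝ) (hx : x ∈ LinearMap.ker (TC C)) (hnn : ∀ v, 0 ≤ x v)
    (u w : ↥C) (hw : dotp (u : Fin 8 → ℝ) w = -1) (hu : x u = 0) : x w = 0 := by
  have hk := ker_key C hroot x hx u
  rw [hu] at hk
  have hwu : w ≠ u := by
    intro h; subst h
    rw [hroot (w : Fin 8 → ℝ) w.2] at hw; norm_num at hw
  have hsum : ∑ v ∈ Finset.univ.erase u, -(x v * dotp (v : Fin 8 → ℝ) u) = 0 := by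
    rw [Finset.sum_neg_distrib]; linarith
  have hterm : ∀ v ∈ Finset.univ.erase u, 0 ≤ -(x v * dotp (v : Fin 8 → ℝ) u) := by
    intro v hv
    have hne : (v : Fin 8 → ℝ) ≠ (u : Fin 8 → ℝ) :=
      fun h => (Finset.ne_of_mem_erase hv) (Subtype.ext h)
    rcases hpair _ v.2 _ u.2 hne with h | h <;> rw [h]
    · simp
    · have := hnn v; nlinarith
  have h0 := (Finset.sum_eq_zero_iff_of_nonneg hterm).mp hsum w
    (Finset.mem_erase.mpr ⟨hwu, Finset.mem_univ w⟩)
  have hdw : dotp (w : Fin 8 → ℝ) u = -1 := by rw [dotp_comm]; exact hw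
  rw [hdw] at h0
  linarith

lemma ker_pos (hroot : ∀ v ∈ C, dotp v v = 2)
    (hpair : ∀ u ∈ C, ∀ v ∈ C, u ≠ v → dotp u v = 0 ∨ dotp u v = -1)
    (hconn : ∀ u w : ↥C,
      Relation.ReflTransGen (fun a b : ↥C => dotp (a : Fin 8 → ℝ) b = -1) u w)
    (x : ↥C → ℝ) (hx : x ∈ LinearMap.ker (TC C)) (hnn : ∀ v, 0 ≤ x v)
    (hne : x ≠ 0) : ∀ u, 0 < x u := by
  obtain ⟨u₀, hu₀⟩ := Function.ne_iff.mp hne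
  intro u
  rcases (hnn u).lt_or_eq with h | h
  · exact h
  · exfalso
    have prop : ∀ w, Relation.ReflTransGen
        (fun a b : ↥C => dotp (a : Fin 8 → ℝ) b = -1) u w → x w = 0 := by
      intro w hw
      induction hw with
      | refl => exact h.symm
      | tail h₁ h₂ ih => exact ker_prop C hroot hpair x hx hnn _ _ h₂ ih
    exact hu₀ (prop u₀ (hconn u u₀))

lemma ker_nonzero (hroot : ∀ v ∈ C, dotp v v = 2)
    (hpair : ∀ u ∈ C, ∀ v ∈ C, u ≠ v → dotp u v = 0 ∨ dotp u v = -1)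
    (hconn : ∀ u w : ↥C,
      Relation.ReflTransGen (fun a b : ↥C => dotp (a : Fin 8 → ℝ) b = -1) u w)
    (x : ↥C → ℝ) (hx : x ∈ LinearMap.ker (TC C)) (hne : x ≠ 0) :
    ∀ u, x u ≠ 0 := by
  have ha := abs_mem_ker C hroot hpair x hx
  have hane : (fun v => |x v|) ≠ 0 := by
    intro h
    apply hne
    funext v
    have := congrFun h v
    simpa using this
  have hpos := ker_pos C hroot hpair hconn _ ha (fun v => abs_nonneg _) hane
  intro u h0
  have := hpos u
  rw [h0] at this
  simp at this

lemma three_le_card (hroot : ∀ v ∈ C, dotp v v = 2)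
    (hpair : ∀ u ∈ C, ∀ v ∈ C, u ≠ v → dotp u v = 0 ∨ dotp u v = -1)
    (hconn : ∀ u w : ↥C,
      Relation.ReflTransGen (fun a b : ↥C => dotp (a : Fin 8 → ℝ) b = -1) u w)
    (x : ↥C → ℝ) (hx : x ∈ LinearMap.ker (TC C)) (hne : x ≠ 0) :
    3 ≤ C.card := by
  set a : ↥C → ℝ := fun v => |x v| with hadef
  have ha := abs_mem_ker C hroot hpair x hx
  have hane : a ≠ 0 := by
    intro h
    apply hne
    funext v
    have := congrFun h v
    simpa [hadef] using this
  have hnn : ∀ v, 0 ≤ a v := fun v => abs_nonneg _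
  have hpos := ker_pos C hroot hpair hconn _ ha hnn hane
  obtain ⟨u₀, hu₀⟩ := Function.ne_iff.mp hne
  have hCne : (Finset.univ : Finset ↥C).Nonempty := ⟨u₀, Finset.mem_univ _⟩
  obtain ⟨u, -, hu⟩ := Finset.exists_max_image Finset.univ a hCne
  have hk := ker_key C hroot a ha u
  have h1 : a u * 2 = ∑ v ∈ Finset.univ.erase u, -(a v * dotp (v : Fin 8 → ℝ) u) := by
    rw [Finset.sum_neg_distrib]; linarith
  have h2 : ∑ v ∈ Finset.univ.erase u, -(a v * dotp (v : Fin 8 → ℝ) u)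
      ≤ ∑ _v ∈ Finset.univ.erase u, a u := by
    refine Finset.sum_le_sum fun v hv => ?_
    have hne2 : (v : Fin 8 → ℝ) ≠ (u : Fin 8 → ℝ) :=
      fun h => (Finset.ne_of_mem_erase hv) (Subtype.ext h)
    rcases hpair _ v.2 _ u.2 hne2 with h | h <;> rw [h]
    · simp only [mul_zero, neg_zero]
      exact le_of_lt (hpos u)
    · simp only [mul_neg_one, neg_neg]
      exact hu v (Finset.mem_univ v)
  have hcard : (Finset.univ.erase u).card = C.card - 1 := by
    rw [Finset.card_erase_of_mem (Finset.mem_univ u), Finset.card_univ, Fintype.card_coe]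
  have h3 : ∑ _v ∈ Finset.univ.erase u, a u = ((C.card - 1 : ℕ) : ℝ) * a u := by
    rw [Finset.sum_const, hcard, nsmul_eq_mul]
  have h4 : (2:ℝ) * a u ≤ ((C.card - 1 : ℕ) : ℝ) * a u := by
    rw [← h3]; linarith
  have h5 : (2:ℝ) ≤ ((C.card - 1 : ℕ) : ℝ) :=
    le_of_mul_le_mul_right (by linarith [h4]) (hpos u)
  have h6 : 2 ≤ C.card - 1 := by exact_mod_cast h5
  omega

lemma finrank_ker_le_one
    (hroot : ∀ v ∈ C, dotp v v = 2)
    (hpair : ∀ u ∈ C, ∀ v ∈ C, u ≠ v → dotp u v = 0 ∨ dotp u v = -1)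
    (hconn : ∀ u w : ↥C,
      Relation.ReflTransGen (fun a b : ↥C => dotp (a : Fin 8 → ℝ) b = -1) u w) :
    Module.finrank ℝ (LinearMap.ker (TC C)) ≤ 1 := by
  by_cases h : LinearMap.ker (TC C) = ⊥
  · rw [h, finrank_bot]; omega
  · obtain ⟨x, hx, hxne⟩ := Submodule.exists_mem_ne_zero_of_ne_bot h
    have hz := ker_nonzero C hroot hpair hconn x hx hxne
    obtain ⟨u₀, -⟩ := Function.ne_iff.mp hxne
    have hle : LinearMap.ker (TC C) ≤ span ℝ {x} := by
      intro y hy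
      set t := y u₀ / x u₀ with ht
      have hd : y - t • x ∈ LinearMap.ker (TC C) :=
        sub_mem hy (Submodule.smul_mem _ _ hx)
      by_cases hd0 : y - t • x = 0
      · rw [Submodule.mem_span_singleton]
        exact ⟨t, by rw [eq_comm, ← sub_eq_zero]; exact hd0⟩
      · exfalso
        apply ker_nonzero C hroot hpair hconn _ hd hd0 u₀
        simp only [Pi.sub_apply, Pi.smul_apply, smul_eq_mul, ht]
        rw [div_mul_cancel₀ _ (hz u₀)]
        ring
    calc Module.finrank ℝ (LinearMap.ker (TC C))
        ≤ Module.finrank ℝ (span ℝ {x}) := Submodule.finrank_mono hle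
      _ = 1 := finrank_span_singleton hxne

lemma comp_bound (hroot : ∀ v ∈ C, dotp v v = 2)
    (hpair : ∀ u ∈ C, ∀ v ∈ C, u ≠ v → dotp u v = 0 ∨ dotp u v = -1)
    (hconn : ∀ u w : ↥C,
      Relation.ReflTransGen (fun a b : ↥C => dotp (a : Fin 8 → ℝ) b = -1) u w) :
    2 * C.card ≤ 3 * Module.finrank ℝ (span ℝ (C : Set (Fin 8 → ℝ))) := by
  have hrn := LinearMap.finrank_range_add_finrank_ker (TC C)
  rw [range_TC, Module.finrank_fintype_fun_eq_card, Fintype.card_coe] at hrn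
  by_cases h : LinearMap.ker (TC C) = ⊥
  · rw [h, finrank_bot] at hrn; omega
  · obtain ⟨x, hx, hxne⟩ := Submodule.exists_mem_ne_zero_of_ne_bot h
    have h3 := three_le_card C hroot hpair hconn x hx hxne
    have h1 := finrank_ker_le_one C hroot hpair hconn
    omega

end Component


lemma dotp_add_right (w x y : Fin 8 → ℝ) : dotp w (x + y) = dotp w x + dotp w y := by
  simp [dotp, mul_add, Finset.sum_add_distrib]

lemma dotp_smul_right (c : ℝ) (w x : Fin 8 → ℝ) : dotp w (c • x) = c * dotp w x := by
  simp [dotp, Finset.mul_sum, mul_left_comm]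

lemma dotp_zero_right (w : Fin 8 → ℝ) : dotp w 0 = 0 := by simp [dotp]

lemma dotp_span_zero (A B : Set (Fin 8 → ℝ)) (h : ∀ a ∈ A, ∀ b ∈ B, dotp a b = 0) :
    ∀ x ∈ span ℝ A, ∀ y ∈ span ℝ B, dotp x y = 0 := by
  intro x hx
  induction hx using Submodule.span_induction with
  | mem a ha =>
    intro y hy
    induction hy using Submodule.span_induction with
    | mem b hb => exact h a ha b hb
    | zero => exact dotp_zero_right a
    | add y z hy hz ihy ihz => rw [dotp_add_right, ihy, ihz]; ring
    | smul r y hy ihy => rw [dotp_smul_right, ihy]; ring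
  | zero => intro y hy; exact dotp_zero_left y
  | add x z hx hz ihx ihz => intro y hy; rw [dotp_add_left, ihx y hy, ihz y hy]; ring
  | smul r z hz ihz => intro y hy; rw [dotp_smul_left, ihz y hy]; ring

lemma grand (n : ℕ) : ∀ S : Finset (Fin 8 → ℝ), S.card ≤ n →
    (∀ v ∈ S, dotp v v = 2) →
    (∀ u ∈ S, ∀ v ∈ S, u ≠ v → dotp u v = 0 ∨ dotp u v = -1) →
    2 * S.card ≤ 3 * Module.finrank ℝ (span ℝ (S : Set (Fin 8 → ℝ))) := by
  induction n with
  | zero =>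
    intro S hS _ _
    have : S.card = 0 := Nat.le_zero.mp hS
    rw [this]
    omega
  | succ n ih =>
    intro S hS hroot hpair
    rcases S.eq_empty_or_nonempty with rfl | ⟨v, hv⟩
    · simp
    classical
    set E : (Fin 8 → ℝ) → (Fin 8 → ℝ) → Prop :=
      fun a b => a ∈ S ∧ b ∈ S ∧ dotp a b = -1 with hE
    set C : Finset (Fin 8 → ℝ) := S.filter (fun u => Relation.ReflTransGen E v u) with hC
    have hCS : C ⊆ S := Finset.filter_subset _ _
    have hmemC : ∀ u, u ∈ C ↔ u ∈ S ∧ Relation.ReflTransGen E v u := by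
      intro u; rw [hC, Finset.mem_filter]
    have hvC : v ∈ C := (hmemC v).mpr ⟨hv, Relation.ReflTransGen.refl⟩
    have hclose : ∀ a ∈ C, ∀ b, E a b → b ∈ C := by
      intro a ha b hab
      exact (hmemC b).mpr ⟨hab.2.1, Relation.ReflTransGen.tail ((hmemC a).mp ha).2 hab⟩
    have hlift : ∀ a, Relation.ReflTransGen E v a → ∀ ha : a ∈ C,
        Relation.ReflTransGen (fun p q : ↥C => dotp (p : Fin 8 → ℝ) q = -1)
          ⟨v, hvC⟩ ⟨a, ha⟩ := by
      intro a h
      induction h with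
      | refl => intro _; exact Relation.ReflTransGen.refl
      | @tail b c' h₁ h₂ ih2 =>
        intro hc
        have hb : b ∈ C := (hmemC b).mpr ⟨h₂.1, h₁⟩
        exact Relation.ReflTransGen.tail (ih2 hb) h₂.2.2
    have hsymm : Symmetric (fun p q : ↥C => dotp (p : Fin 8 → ℝ) q = -1) := by
      intro p q h; rw [dotp_comm]; exact h
    have hconn : ∀ u w : ↥C,
        Relation.ReflTransGen (fun p q : ↥C => dotp (p : Fin 8 → ℝ) q = -1) u w := by
      intro u w
      have h1 := hlift (u : Fin 8 → ℝ) (((hmemC _).mp u.2).2) u.2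
      have h2 := hlift (w : Fin 8 → ℝ) (((hmemC _).mp w.2).2) w.2
      have hu : (⟨(u : Fin 8 → ℝ), u.2⟩ : ↥C) = u := rfl
      have hw : (⟨(w : Fin 8 → ℝ), w.2⟩ : ↥C) = w := rfl
      rw [hu] at h1; rw [hw] at h2
      exact ((@Relation.ReflTransGen.stdSymm _ _ ⟨hsymm⟩).symm _ _ h1).trans h2
    have hcb := comp_bound C (fun x hx => hroot x (hCS hx))
      (fun a ha b hb => hpair a (hCS ha) b (hCS hb)) hconn
    set D : Finset (Fin 8 → ℝ) := S \ C with hD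
    have hDS : D ⊆ S := Finset.sdiff_subset
    have hcardS : D.card + C.card = S.card := Finset.card_sdiff_add_card_eq_card hCS
    have hDcard : D.card ≤ n := by
      have h1 : 1 ≤ C.card := Finset.card_pos.mpr ⟨v, hvC⟩
      omega
    have hib := ih D hDcard (fun x hx => hroot x (hDS hx))
      (fun a ha b hb => hpair a (hDS ha) b (hDS hb))
    have horth : ∀ a ∈ (C : Set (Fin 8 → ℝ)), ∀ b ∈ (D : Set (Fin 8 → ℝ)),
        dotp a b = 0 := by
      intro a ha b hb
      have haC : a ∈ C := ha
      have hbD : b ∈ D := hb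
      have hbS : b ∈ S := hDS hbD
      have hbnC : b ∉ C := (Finset.mem_sdiff.mp hbD).2
      have hne : a ≠ b := fun h => hbnC (h ▸ haC)
      rcases hpair a (hCS haC) b hbS hne with h | h
      · exact h
      · exact absurd (hclose a haC b ⟨hCS haC, hbS, h⟩) hbnC
    have hspan : span ℝ (S : Set (Fin 8 → ℝ))
        = span ℝ (C : Set (Fin 8 → ℝ)) ⊔ span ℝ (D : Set (Fin 8 → ℝ)) := by
      rw [← Submodule.span_union, ← Finset.coe_union, Finset.union_sdiff_of_subset hCS]
    have hinf : span ℝ (C : Set (Fin 8 → ℝ)) ⊓ span ℝ (D : Set (Fin 8 → ℝ)) = ⊥ := by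
      rw [Submodule.eq_bot_iff]
      intro x hx
      exact eq_zero_of_dotp_self_nonpos x
        (le_of_eq (dotp_span_zero _ _ horth x hx.1 x hx.2))
    have hfr := Submodule.finrank_sup_add_finrank_inf_eq
      (span ℝ (C : Set (Fin 8 → ℝ))) (span ℝ (D : Set (Fin 8 → ℝ)))
    rw [hinf, finrank_bot] at hfr
    rw [hspan]
    omega

lemma card_le_twelve (S : Finset (Fin 8 → ℝ))
    (hroot : ∀ v ∈ S, dotp v v = 2)
    (hpair : ∀ u ∈ S, ∀ v ∈ S, u ≠ v → dotp u v = 0 ∨ dotp u v = -1) :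
    S.card ≤ 12 := by
  have h := grand S.card S le_rfl hroot hpair
  have h8 : Module.finrank ℝ (span ℝ (S : Set (Fin 8 → ℝ))) ≤ 8 := by
    have h2 := Submodule.finrank_le (span ℝ (S : Set (Fin 8 → ℝ)))
    rwa [Module.finrank_fintype_fun_eq_card, Fintype.card_fin] at h2
  omega

end E8Aux

namespace E8Ex

def Nq : Fin 12 → Fin 8 → ℤ :=
  ![![2,-2,0,0,0,0,0,0],
    ![0,2,-2,0,0,0,0,0],
    ![-2,0,2,0,0,0,0,0],
    ![0,0,0,2,-2,0,0,0],
    ![0,0,0,0,2,-2,0,0],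
    ![0,0,0,-2,0,2,0,0],
    ![0,0,0,0,0,0,2,-2],
    ![-1,-1,-1,1,1,1,-1,1],
    ![1,1,1,-1,-1,-1,-1,1],
    ![0,0,0,0,0,0,2,2],
    ![1,1,1,1,1,1,-1,-1],
    ![-1,-1,-1,-1,-1,-1,-1,-1]]

lemma hz2 : ∀ i : Fin 12, ∑ k, Nq i k * Nq i k = 8 := by decide
lemma hzpair : ∀ i j : Fin 12, i = j ∨
    (∑ k, Nq i k * Nq j k = 0 ∨ ∑ k, Nq i k * Nq j k = -4) := by decide
lemma hzbranch : ∀ i : Fin 12,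
    (∀ k, Nq i k % 2 = 0) ∨ (∀ k, Nq i k % 2 = 1) := by decide
lemma hzsum : ∀ i : Fin 12, (∑ k, Nq i k) % 4 = 0 := by decide




noncomputable def W : Fin 12 → Fin 8 → ℝ := fun i k => ((Nq i k : ℤ) : ℝ) / 2

lemma hcast_mul (i j : Fin 12) :
    ∑ k, W i k * W j k = ((∑ k, Nq i k * Nq j k : ℤ) : ℝ) / 4 := by
  unfold W
  push_cast
  rw [Finset.sum_div]
  exact Finset.sum_congr rfl fun k _ => by ring

lemma hW2 (i : Fin 12) : ∑ k, (W i k) ^ 2 = 2 := by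
  have h1 : ∑ k, (W i k) ^ 2 = ∑ k, W i k * W i k :=
    Finset.sum_congr rfl fun k _ => sq (W i k) ▸ pow_two (W i k)
  rw [h1, hcast_mul, hz2]
  norm_num

lemma hWpair (i j : Fin 12) (h : i ≠ j) :
    ∑ k, W i k * W j k = 0 ∨ ∑ k, W i k * W j k = -1 := by
  rcases hzpair i j with h' | h' | h'
  · exact absurd h' h
  · left; rw [hcast_mul, h']; norm_num
  · right; rw [hcast_mul, h']; norm_num

lemma hWinj : Function.Injective W := by
  intro i j h
  by_contra hne
  have h2 : ∑ k, W i k * W j k = 2 := by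
    rw [h]
    have := hW2 j
    rw [← this]
    exact Finset.sum_congr rfl fun k _ => (pow_two (W j k)).symm
  rcases hWpair i j hne with h' | h' <;> rw [h'] at h2 <;> norm_num at h2

lemma hWroot (i : Fin 12) : IsE8Root (W i) := by
  refine ⟨⟨?_, ?_⟩, hW2 i⟩
  · rcases hzbranch i with h | h
    · left
      intro k
      obtain ⟨m, hm⟩ : (2:ℤ) ∣ Nq i k := Int.dvd_of_emod_eq_zero (h k)
      refine ⟨m, ?_⟩
      show ((Nq i k : ℤ) : ℝ) / 2 = _
      rw [hm]
      push_cast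
      ring
    · right
      intro k
      obtain ⟨m, hm⟩ : (2:ℤ) ∣ (Nq i k - 1) := by have := h k; omega
      refine ⟨m, ?_⟩
      show ((Nq i k : ℤ) : ℝ) / 2 = _
      have hm2 : Nq i k = 2 * m + 1 := by omega
      rw [hm2]
      push_cast
      ring
  · obtain ⟨m, hm⟩ : (4:ℤ) ∣ ∑ k, Nq i k := Int.dvd_of_emod_eq_zero (hzsum i)
    refine ⟨m, ?_⟩
    have hc : ∑ k, W i k = ((∑ k, Nq i k : ℤ) : ℝ) / 2 := by
      unfold W
      push_cast
      rw [Finset.sum_div]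
    rw [hc, hm]
    push_cast
    ring

noncomputable def S12 : Finset (Fin 8 → ℝ) := Finset.image W Finset.univ

lemma hS12card : S12.card = 12 := by
  rw [S12, Finset.card_image_of_injective _ hWinj, Finset.card_univ, Fintype.card_fin]

lemma hS12root : ∀ v ∈ S12, IsE8Root v := by
  intro v hv
  obtain ⟨i, -, rfl⟩ := Finset.mem_image.mp hv
  exact hWroot i

lemma hS12pair : ∀ u ∈ S12, ∀ v ∈ S12, u ≠ v →
    ∑ k, u k * v k = 0 ∨ ∑ k, u k * v k = -1 := by
  intro u hu v hv huv
  obtain ⟨i, -, rfl⟩ := Finset.mem_image.mp hu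
  obtain ⟨j, -, rfl⟩ := Finset.mem_image.mp hv
  exact hWpair i j (fun h => huv (h ▸ rfl))

end E8Ex

theorem stmt_14 :
    (∀ S : Finset (Fin 8 → ℝ),
        (∀ v ∈ S, IsE8Root v) →
        (∀ u ∈ S, ∀ v ∈ S, u ≠ v →
          ∑ i, u i * v i = 0 ∨ ∑ i, u i * v i = -1) →
        S.card ≤ 12) ∧
    (∃ S : Finset (Fin 8 → ℝ),
        S.card = 12 ∧ (∀ v ∈ S, IsE8Root v) ∧
        (∀ u ∈ S, ∀ v ∈ S, u ≠ v →
          ∑ i, u i * v i = 0 ∨ ∑ i, u i * v i = -1)) := by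
  constructor
  · intro S hroot hpair
    apply E8Aux.card_le_twelve S
    · intro v hv
      have h := (hroot v hv).2
      show (∑ i, v i * v i) = 2
      rw [← h]
      exact Finset.sum_congr rfl fun i _ => (pow_two (v i)).symm
    · exact fun u hu v hv h => hpair u hu v hv h
  · exact ⟨E8Ex.S12, E8Ex.hS12card, E8Ex.hS12root, E8Ex.hS12pair⟩
end

section
/- Let E₈ be the positive definite E₈ root lattice, fix a root ē, and let S be a set of roots such that ⟨e, ē⟩ = −1 for every e ∈ S and ⟨u, v⟩ ∈ {0, −1} for all distinct u, v ∈ S. Then |S| ≤ 4. -/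
theorem stmt_15 (ebar : Fin 8 → ℝ) (hebar : IsE8Root ebar)
    (S : Finset (Fin 8 → ℝ))
    (hroot : ∀ v ∈ S, IsE8Root v)
    (hbar : ∀ e ∈ S, ∑ i, e i * ebar i = -1)
    (hpair : ∀ u ∈ S, ∀ v ∈ S, u ≠ v →
        ∑ i, u i * v i = 0 ∨ ∑ i, u i * v i = -1) :
    S.card ≤ 4 := by
  by_contra h
  push_neg at h
  obtain ⟨T, hTS, hT5⟩ := S.exists_subset_card_eq h
  -- Consider w = ∑ e in T, e + (5/2) ebar; ⟨w,w⟩ ≥ 0.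
  have key : (0:ℝ) ≤ ∑ i, ((∑ e ∈ T, e i) + (5/2) * ebar i) ^ 2 :=
    Finset.sum_nonneg fun i _ => sq_nonneg _
  -- Expand the square.
  have expand : ∑ i, ((∑ e ∈ T, e i) + (5/2) * ebar i) ^ 2
      = (∑ e ∈ T, ∑ f ∈ T, ∑ i, e i * f i)
        + 5 * (∑ e ∈ T, ∑ i, e i * ebar i)
        + (25/4) * ∑ i, (ebar i) ^ 2 := by
    have h1 : ∀ i : Fin 8, ((∑ e ∈ T, e i) + (5/2) * ebar i) ^ 2
        = (∑ e ∈ T, ∑ f ∈ T, e i * f i)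
          + 5 * (∑ e ∈ T, e i * ebar i)
          + (25/4) * (ebar i) ^ 2 := by
      intro i
      have hA : (∑ e ∈ T, e i) * (∑ f ∈ T, f i) = ∑ e ∈ T, ∑ f ∈ T, e i * f i :=
        Finset.sum_mul_sum _ _ _ _
      have hB : (∑ e ∈ T, e i) * ebar i = ∑ e ∈ T, e i * ebar i :=
        Finset.sum_mul _ _ _
      linear_combination hA + 5 * hB
    simp only [h1]
    rw [Finset.sum_add_distrib, Finset.sum_add_distrib]
    congr 1
    · congr 1
      · rw [Finset.sum_comm]
        exact Finset.sum_congr rfl fun e _ => Finset.sum_comm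
      · rw [← Finset.mul_sum, Finset.sum_comm]
    · rw [← Finset.mul_sum]
  -- The double sum is at most 10.
  have hdiag : ∀ e ∈ T, ∑ i, e i * e i = 2 := by
    intro e he
    have := (hroot e (hTS he)).2
    simpa [sq] using this
  have hdouble : (∑ e ∈ T, ∑ f ∈ T, ∑ i, e i * f i) ≤ 10 := by
    have hb : ∀ e ∈ T, ∑ f ∈ T, ∑ i, e i * f i ≤ 2 := by
      intro e he
      have : ∑ f ∈ T, ∑ i, e i * f i
          ≤ ∑ f ∈ T, (if e = f then (2:ℝ) else 0) := by
        apply Finset.sum_le_sum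
        intro f hf
        by_cases hef : e = f
        · simp [hef, (hdiag f hf).le]
        · rcases hpair e (hTS he) f (hTS hf) hef with h0 | h0 <;>
            rw [h0, if_neg hef] <;> norm_num
      calc ∑ f ∈ T, ∑ i, e i * f i ≤ ∑ f ∈ T, (if e = f then (2:ℝ) else 0) := this
        _ = 2 := by rw [Finset.sum_ite_eq T e (fun _ => (2:ℝ))]; simp [he]
    calc (∑ e ∈ T, ∑ f ∈ T, ∑ i, e i * f i) ≤ ∑ e ∈ T, (2:ℝ) :=
          Finset.sum_le_sum hb
      _ = 10 := by rw [Finset.sum_const, hT5]; norm_num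
  -- The cross term is -25.
  have hcross : (∑ e ∈ T, ∑ i, e i * ebar i) = -5 := by
    have : ∀ e ∈ T, ∑ i, e i * ebar i = -1 := fun e he => hbar e (hTS he)
    rw [Finset.sum_congr rfl this, Finset.sum_const, hT5]
    norm_num
  have hnorm : ∑ i, (ebar i) ^ 2 = 2 := hebar.2
  rw [expand, hcross, hnorm] at key
  nlinarith [hdouble]
end
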